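/- arXiv:2504.14184 — 2 statements merged into one kernel-verified Lean document; each statement's English description precedes it below -/
import Mathlib

section
/- Let $G$ be a group acting strongly transitively on a thick spherical building $\Omega$ of type $(W,S)$ by type preserving automorphisms, with Borel subgroup $B$ (the stabiliser of a base chamber $C_0$). Suppose for each element $\theta \in G$ there exists a chamber $C$ with $\delta(C, C^\theta) = w_\theta$ for some designated element $w_\theta$ drawn from a fixed finite set $\mathcal{W} \subseteq W$ (depending on $\theta$). Then every conjugacy class $\mathcal{C}$ of $G$ satisfies $\mathcal{C} \cap \bigcup_{w \in \mathcal{W}} wB \neq \emptyset$, where $wB$ denotes the coset $n_w B$ for a representative $n_w$ of $w$. -/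
/-- General Density Theorem.  Let `G` act strongly transitively on a spherical building
with chamber set `Ω`, Weyl distance `δ`, base chamber `C₀` and Borel subgroup
`B = Stab_G(C₀)`, with the Bruhat decomposition relating `δ` and double cosets via
representatives `n : W → G`.  If for every `θ ∈ G` there is a chamber `C` with
`δ(C, θC) = w` for some `w` in a fixed set `𝒲 ⊆ W`, then every conjugacy class of `G`
meets `⋃_{w ∈ 𝒲} (n w)B`. -/
theorem density_theorem {G Ω W : Type*} [Group G] [MulAction G Ω]
    (δ : Ω → Ω → W) (C₀ : Ω) (n : W → G) (𝒲 : Set W)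
    (htrans : ∀ c : Ω, ∃ g : G, g • C₀ = c)
    (hBruhat : ∀ (g h : G) (w : W), δ (g • C₀) (h • C₀) = w ↔
      ∃ b₁ ∈ MulAction.stabilizer G C₀, ∃ b₂ ∈ MulAction.stabilizer G C₀,
        g⁻¹ * h = b₁ * n w * b₂)
    (hdisp : ∀ θ : G, ∃ w ∈ 𝒲, ∃ Ch : Ω, δ Ch (θ • Ch) = w) :
    ∀ θ : G, ∃ g : G, ∃ w ∈ 𝒲, ∃ b ∈ MulAction.stabilizer G C₀,
      g⁻¹ * θ * g = n w * b := by
  intro θ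
  obtain ⟨w, hw, Ch, hCh⟩ := hdisp θ
  obtain ⟨g, hg⟩ := htrans Ch
  have h1 : δ (g • C₀) ((θ * g) • C₀) = w := by
    rw [mul_smul, hg]; exact hCh
  obtain ⟨b₁, hb₁, b₂, hb₂, heq⟩ := (hBruhat g (θ * g) w).mp h1
  refine ⟨g * b₁, w, hw, b₂ * b₁, mul_mem hb₂ hb₁, ?_⟩
  have : g⁻¹ * (θ * g) = b₁ * n w * b₂ := heq
  rw [mul_inv_rev]
  calc b₁⁻¹ * g⁻¹ * θ * (g * b₁) = b₁⁻¹ * (g⁻¹ * (θ * g)) * b₁ := by group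
    _ = b₁⁻¹ * (b₁ * n w * b₂) * b₁ := by rw [this]
    _ = n w * (b₂ * b₁) := by group
end

section
/- Let $V = K^{2n}$ with the hyperbolic quadratic form $Q(x) = \sum_{i=1}^n x_{-i}x_i$ over a field $K$, $n \geq 2$, and let $b$ be the associated bilinear form. Let $p, u$ be two distinct singular points (isotropic one-dimensional subspaces) of the quadric with $b(p,u) \neq 0$ (i.e. $p$ and $u$ are not collinear on the quadric). Then the set of singular points orthogonal to every singular point of $p^\perp \cap u^\perp$ is exactly $\{p, u\}$. -/
/-- The hyperbolic quadratic form `Q(x) = ∑ x₋ᵢ xᵢ` on `K^{2n}`, modelled as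
`(Fin n → K) × (Fin n → K)`. -/
def hypQ {K : Type*} [Field K] {n : ℕ} (v : (Fin n → K) × (Fin n → K)) : K :=
  ∑ i : Fin n, v.1 i * v.2 i

/-- The bilinear form obtained by polarizing `hypQ`. -/
def hypB {K : Type*} [Field K] {n : ℕ} (v w : (Fin n → K) × (Fin n → K)) : K :=
  hypQ (v + w) - hypQ v - hypQ w

/-!
Put `W = p^⊥ ∩ u^⊥`. Since `b(p, u) ≠ 0`, the space splits as `⟨p, u⟩ ⊕ W`, and nondegeneracy
of `b` makes `W^⊥ = ⟨p, u⟩`. The isotropic vectors `a p + b u` of `⟨p, u⟩` have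
`Q = a b · b(p, u)`, so they are the multiples of `p` and of `u`. It remains to see that a vector
orthogonal to the isotropic vectors of `W` is orthogonal to all of `W`: for the hyperbolic form,
every anisotropic `x ∈ W` pairs nontrivially with an isotropic `e ∈ W`, and then
`x = (x + c e) - c e` with `x + c e` isotropic for a suitable `c`.
-/

section

open Matrix QuadraticMap

namespace QuadraticMap

variable {K V : Type*} [Field K] [AddCommGroup V] [Module K V] (Q : QuadraticForm K V)
  {p u : V}

theorem map_smul_add_smul_of_isotropic (hp : Q p = 0) (hu : Q u = 0) (a b : K) :
    Q (a • p + b • u) = a * b * polar Q p u := by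
  rw [QuadraticMap.map_add Q, QuadraticMap.map_smul, QuadraticMap.map_smul, hp, hu,
    polar_smul_left, polar_smul_right]
  simp only [smul_eq_mul]
  ring

theorem exists_sub_smul_sub_smul_orthogonal (hp : Q p = 0) (hu : Q u = 0)
    (hpu : polar Q p u ≠ 0) (z : V) :
    ∃ a b : K, polar Q p (z - a • p - b • u) = 0 ∧ polar Q u (z - a • p - b • u) = 0 := by
  refine ⟨polar Q u z / polar Q p u, polar Q p z / polar Q p u, ?_, ?_⟩
  · simp only [polar_sub_right, polar_smul_right, polar_self, hp, smul_eq_mul, smul_zero]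
    field_simp
    ring
  · simp only [polar_sub_right, polar_smul_right, polar_self, hu, smul_eq_mul, smul_zero,
      polar_comm Q u p]
    field_simp
    ring

theorem exists_eq_smul_add_smul_of_orthogonal (hQ : (polarBilin Q).SeparatingLeft)
    (hp : Q p = 0) (hu : Q u = 0) (hpu : polar Q p u ≠ 0) {w : V}
    (hw : ∀ z, polar Q p z = 0 → polar Q u z = 0 → polar Q w z = 0) :
    ∃ a b : K, w = a • p + b • u := by
  obtain ⟨a, b, hpw, huw⟩ := exists_sub_smul_sub_smul_orthogonal Q hp hu hpu w
  refine ⟨a, b, sub_eq_zero.mp (sub_sub w (a • p) (b • u) ▸ hQ _ fun z => ?_)⟩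
  obtain ⟨a', b', hpz, huz⟩ := exists_sub_smul_sub_smul_orthogonal Q hp hu hpu z
  have hz : z = (z - a' • p - b' • u) + a' • p + b' • u := by abel
  rw [polarBilin_apply_apply, hz, polar_add_right, polar_add_right, polar_smul_right,
    polar_smul_right, polar_comm Q _ p, hpw, polar_comm Q _ u, huw, polar_sub_left,
    polar_sub_left, polar_smul_left, polar_smul_left, hw _ hpz huz, hpz, huz]
  simp

theorem eq_zero_or_eq_zero_of_isotropic_smul_add_smul (hp : Q p = 0) (hu : Q u = 0)
    (hpu : polar Q p u ≠ 0) {a b : K} (h : Q (a • p + b • u) = 0) : a = 0 ∨ b = 0 := by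
  rw [map_smul_add_smul_of_isotropic Q hp hu] at h
  simpa [hpu] using h

theorem exists_isotropic_orthogonal_polar_ne_zero
    (hQ : ∀ p x, Q p = 0 → Q x ≠ 0 → ∃ y, Q y = 0 ∧ polar Q p y = 0 ∧ polar Q x y ≠ 0)
    (hp : Q p = 0) (hpu : polar Q p u ≠ 0) {x : V} (hpx : polar Q p x = 0) (hx : Q x ≠ 0) :
    ∃ e, Q e = 0 ∧ polar Q p e = 0 ∧ polar Q u e = 0 ∧ polar Q x e ≠ 0 := by
  obtain ⟨y, hy, hpy, hxy⟩ := hQ p x hp hx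
  refine ⟨y - (polar Q u y / polar Q p u) • p, ?_, ?_, ?_, ?_⟩
  · rw [sub_eq_add_neg, ← neg_smul, QuadraticMap.map_add Q, QuadraticMap.map_smul,
      polar_smul_right, polar_comm Q y p, hpy, hy, hp]
    simp
  · simp [polar_sub_right, polar_smul_right, polar_self, hp, hpy]
  · rw [polar_sub_right, polar_smul_right, polar_comm Q u p, smul_eq_mul, div_mul_cancel₀ _ hpu,
      sub_self]
  · simpa [polar_sub_right, polar_smul_right, polar_comm Q x p, hpx] using hxy

theorem polar_eq_zero_of_polar_isotropic_eq_zero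
    (hQ : ∀ p x, Q p = 0 → Q x ≠ 0 → ∃ y, Q y = 0 ∧ polar Q p y = 0 ∧ polar Q x y ≠ 0)
    (hp : Q p = 0) (hpu : polar Q p u ≠ 0) {w : V}
    (hw : ∀ v, v ≠ 0 → Q v = 0 → polar Q p v = 0 → polar Q u v = 0 → polar Q w v = 0)
    {x : V} (hpx : polar Q p x = 0) (hux : polar Q u x = 0) : polar Q w x = 0 := by
  have hw' (v) (hv : Q v = 0) (hpv : polar Q p v = 0) (huv : polar Q u v = 0) :
      polar Q w v = 0 := by
    obtain rfl | hv₀ := eq_or_ne v 0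
    · exact polar_zero_right Q w
    · exact hw v hv₀ hv hpv huv
  by_cases hx : Q x = 0
  · exact hw' x hx hpx hux
  obtain ⟨e, he, hpe, hue, hxe⟩ :=
    exists_isotropic_orthogonal_polar_ne_zero Q hQ hp hpu hpx hx
  obtain ⟨c, hc⟩ : ∃ c, c * polar Q x e = -Q x := ⟨_, div_mul_cancel₀ _ hxe⟩
  have hxe' : Q (x + c • e) = 0 := by
    rw [QuadraticMap.map_add Q, QuadraticMap.map_smul, polar_smul_right, he, smul_eq_mul,
      smul_eq_mul]
    linear_combination hc
  have h := hw' _ hxe' (by simp [polar_add_right, polar_smul_right, hpx, hpe])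
    (by simp [polar_add_right, polar_smul_right, hux, hue])
  rwa [polar_add_right, polar_smul_right, hw' e he hpe hue, smul_zero, add_zero] at h

theorem isotropic_perp_perp_eq (hsep : (polarBilin Q).SeparatingLeft)
    (hiso : ∀ p x, Q p = 0 → Q x ≠ 0 → ∃ y, Q y = 0 ∧ polar Q p y = 0 ∧ polar Q x y ≠ 0)
    (hp₀ : p ≠ 0) (hu₀ : u ≠ 0) (hp : Q p = 0) (hu : Q u = 0) (hpu : polar Q p u ≠ 0) :
    {w | w ≠ 0 ∧ Q w = 0 ∧
        ∀ v, v ≠ 0 → Q v = 0 → polar Q p v = 0 → polar Q u v = 0 → polar Q w v = 0} =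
      {w | (∃ c : K, c ≠ 0 ∧ w = c • p) ∨ (∃ c : K, c ≠ 0 ∧ w = c • u)} := by
  ext w
  constructor
  · rintro ⟨hw₀, hw, hperp⟩
    obtain ⟨a, b, rfl⟩ := exists_eq_smul_add_smul_of_orthogonal Q hsep hp hu hpu
      fun z => polar_eq_zero_of_polar_isotropic_eq_zero Q hiso hp hpu hperp
    rcases eq_zero_or_eq_zero_of_isotropic_smul_add_smul Q hp hu hpu hw with rfl | rfl
    · exact Or.inr ⟨b, fun hb => hw₀ (by simp [hb]), by simp⟩
    · exact Or.inl ⟨a, fun ha => hw₀ (by simp [ha]), by simp⟩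
  · rintro (⟨c, hc, rfl⟩ | ⟨c, hc, rfl⟩)
    · refine ⟨smul_ne_zero hc hp₀, by simp [QuadraticMap.map_smul, hp], fun v _ _ hpv _ => ?_⟩
      rw [polar_smul_left, hpv, smul_zero]
    · refine ⟨smul_ne_zero hc hu₀, by simp [QuadraticMap.map_smul, hu], fun v _ _ _ huv => ?_⟩
      rw [polar_smul_left, huv, smul_zero]

end QuadraticMap

theorem exists_dotProduct_eq_zero_ne_zero {K ι : Type*} [Field K] [Fintype ι] [DecidableEq ι]
    {s t : ι → K} (h : t ∉ K ∙ s) : ∃ a, a ⬝ᵥ s = 0 ∧ a ⬝ᵥ t ≠ 0 := by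
  obtain ⟨f, hft, hfs⟩ := Submodule.exists_dual_map_eq_bot_of_notMem h inferInstance
  have hf (x : ι → K) : (dotProductEquiv K ι).symm f ⬝ᵥ x = f x := by
    rw [← dotProductEquiv_apply_apply, LinearEquiv.apply_symm_apply]
  refine ⟨(dotProductEquiv K ι).symm f, ?_, by rwa [hf]⟩
  rw [hf, ← Submodule.mem_bot K, ← hfs]
  exact Submodule.mem_map_of_mem (Submodule.mem_span_singleton_self s)

variable (K : Type*) [Field K] (n : ℕ)

-- `hypForm K n v` and `polar (hypForm K n) v w` unfold to `hypQ v` and `hypB v w` by `rfl`.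
def hypForm : QuadraticForm K ((Fin n → K) × (Fin n → K)) :=
  LinearMap.BilinMap.toQuadraticMap <|
    (dotProductBilin K K).compl₁₂ (LinearMap.fst K (Fin n → K) (Fin n → K))
      (LinearMap.snd K (Fin n → K) (Fin n → K))

variable {K n}

theorem hypForm_apply (v : (Fin n → K) × (Fin n → K)) : hypForm K n v = v.1 ⬝ᵥ v.2 := rfl

theorem polar_hypForm (v w : (Fin n → K) × (Fin n → K)) :
    polar (hypForm K n) v w = v.1 ⬝ᵥ w.2 + w.1 ⬝ᵥ v.2 :=
  LinearMap.BilinMap.polar_toQuadraticMap v w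

theorem separatingLeft_polarBilin_hypForm : (polarBilin (hypForm K n)).SeparatingLeft := by
  intro v hv
  have h₁ (t : Fin n → K) : v.1 ⬝ᵥ t = 0 := by
    simpa [polar_hypForm] using hv (0, t)
  have h₂ (t : Fin n → K) : v.2 ⬝ᵥ t = 0 := by
    simpa [polar_hypForm, dotProduct_comm] using hv (t, 0)
  exact Prod.ext (dotProduct_eq_zero _ h₁) (dotProduct_eq_zero _ h₂)

theorem hypForm_exists_isotropic_polar_ne_zero {p x : (Fin n → K) × (Fin n → K)}
    (hp : hypForm K n p = 0) (hx : hypForm K n x ≠ 0) :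
    ∃ y, hypForm K n y = 0 ∧ polar (hypForm K n) p y = 0 ∧ polar (hypForm K n) x y ≠ 0 := by
  by_cases h₂ : x.2 ∈ K ∙ p.2
  · by_cases h₁ : x.1 ∈ K ∙ p.1
    · obtain ⟨c, hc⟩ := Submodule.mem_span_singleton.mp h₁
      obtain ⟨d, hd⟩ := Submodule.mem_span_singleton.mp h₂
      rw [hypForm_apply, ← hc, ← hd, smul_dotProduct, dotProduct_smul, ← hypForm_apply, hp] at hx
      simp at hx
    · obtain ⟨a, hpa, hxa⟩ := exists_dotProduct_eq_zero_ne_zero h₁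
      exact ⟨(0, a), by simp [hypForm_apply], by simpa [polar_hypForm, dotProduct_comm],
        by simpa [polar_hypForm, dotProduct_comm]⟩
  · obtain ⟨a, hpa, hxa⟩ := exists_dotProduct_eq_zero_ne_zero h₂
    exact ⟨(a, 0), by simp [hypForm_apply], by simpa [polar_hypForm, dotProduct_comm],
      by simpa [polar_hypForm, dotProduct_comm]⟩

end

theorem hyperbolic_perp_perp_general {K : Type*} [Field K] {n : ℕ}
    (p u : (Fin n → K) × (Fin n → K))
    (hp0 : p ≠ 0) (hu0 : u ≠ 0) (hpQ : hypQ p = 0) (huQ : hypQ u = 0)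
    (hpu : hypB p u ≠ 0) :
    {w : (Fin n → K) × (Fin n → K) | w ≠ 0 ∧ hypQ w = 0 ∧
        ∀ v : (Fin n → K) × (Fin n → K),
          v ≠ 0 → hypQ v = 0 → hypB p v = 0 → hypB u v = 0 → hypB w v = 0} =
      {w : (Fin n → K) × (Fin n → K) |
        (∃ c : K, c ≠ 0 ∧ w = c • p) ∨ (∃ c : K, c ≠ 0 ∧ w = c • u)} :=
  (hypForm K n).isotropic_perp_perp_eq separatingLeft_polarBilin_hypForm
    (fun _ _ => hypForm_exists_isotropic_polar_ne_zero) hp0 hu0 hpQ huQ hpu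

/-- Let `p, u` be two non-collinear singular points of a hyperbolic quadric of rank
`n ≥ 2`.  The singular points orthogonal to every singular point of `p^⊥ ∩ u^⊥` are
exactly `p` and `u`. -/
theorem hyperbolic_perp_perp {K : Type*} [Field K] {n : ℕ} (hn : 2 ≤ n)
    (p u : (Fin n → K) × (Fin n → K))
    (hp0 : p ≠ 0) (hu0 : u ≠ 0) (hpQ : hypQ p = 0) (huQ : hypQ u = 0)
    (hpu : hypB p u ≠ 0) :
    {w : (Fin n → K) × (Fin n → K) | w ≠ 0 ∧ hypQ w = 0 ∧
        ∀ v : (Fin n → K) × (Fin n → K),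
          v ≠ 0 → hypQ v = 0 → hypB p v = 0 → hypB u v = 0 → hypB w v = 0} =
      {w : (Fin n → K) × (Fin n → K) |
        (∃ c : K, c ≠ 0 ∧ w = c • p) ∨ (∃ c : K, c ≠ 0 ∧ w = c • u)} :=
  hyperbolic_perp_perp_general p u hp0 hu0 hpQ huQ hpu
end
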